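/- Let σ_{-1}, σ_{-2}, ..., σ_{d₂+1} be complex numbers (where d₂ ≤ −2 is an integer, so there are −d₂−1 of them). There exists a choice of these numbers such that for all integers ℓ₁ ≥ 0 and ℓ₃ ≤ −2 with ℓ₁ + 1 ≤ min(−d₂−1, −ℓ₃−1), the Toeplitz-type matrix Θ_{ℓ₁,ℓ₃} with entries (Θ)_{i,j} = σ_{ℓ₃+i−j+1} (interpreting σ_m = 0 for m ≥ 0 or m ≤ d₂), of size (−ℓ₃−1) × (ℓ₁+1), has maximal rank (i.e. rank ℓ₁+1). -/

import Mathlib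

/-- The band Toeplitz matrix `Θ_{ℓ₁,ℓ₃}` of size `(−ℓ₃−1) × (ℓ₁+1)` built from
coefficients `σ : ℤ → ℂ`, with `(i,j)` entry `σ (ℓ₃ + i − j + 1)`. -/
noncomputable def toeplitzTheta (σ : ℤ → ℂ) (ℓ₁ ℓ₃ : ℤ) :
    Matrix (Fin (-ℓ₃ - 1).toNat) (Fin (ℓ₁ + 1).toNat) ℂ :=
  Matrix.of fun i j => σ (ℓ₃ + (i : ℤ) - (j : ℤ) + 1)

open Polynomial


lemma card_support_X_pow_mul (k : ℕ) (u : ℂ[X]) :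
    ((X ^ k * u).support).card = u.support.card := by
  rw [mul_comm]
  symm
  apply Finset.card_bij (fun n _ => n + k)
  · intro a ha
    simp only [mem_support_iff] at ha ⊢
    rwa [coeff_mul_X_pow]
  · intro a _ b _ h; omega
  · intro b hb
    simp only [mem_support_iff, coeff_mul_X_pow'] at hb
    by_cases hk : k ≤ b
    · rw [if_pos hk] at hb
      exact ⟨b - k, by simpa [mem_support_iff] using hb, by omega⟩
    · rw [if_neg hk] at hb; exact absurd rfl hb

lemma card_support_gt_of_dvd (N : ℕ) :
    ∀ h : ℂ[X], h ≠ 0 → (X + 1) ^ N ∣ h → N < h.support.card := by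
  induction N with
  | zero =>
    intro h hne _
    simpa [Finset.card_pos, Polynomial.nonempty_support_iff] using hne
  | succ N ih =>
    intro h hne hdvd
    obtain ⟨u, hu, hXu⟩ := h.exists_eq_pow_rootMultiplicity_mul_and_not_dvd hne 0
    rw [map_zero, sub_zero] at hu hXu
    have hune : u ≠ 0 := by rintro rfl; simp at hu; exact hne hu
    have hu0 : u.coeff 0 ≠ 0 := fun hc => hXu (X_dvd_iff.2 hc)
    have hcop : IsCoprime ((X + 1 : ℂ[X]) ^ (N + 1)) (X ^ h.rootMultiplicity 0) :=
      IsCoprime.pow ⟨1, -1, by ring⟩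
    have hdvdu : (X + 1) ^ (N + 1) ∣ u := by
      refine hcop.dvd_of_dvd_mul_left ?_
      rw [← hu]; exact hdvd
    -- degree of u is at least N+1
    have hdeg : N + 1 ≤ u.natDegree := by
      have := Polynomial.natDegree_le_of_dvd hdvdu hune
      simp only [Polynomial.natDegree_pow] at this
      have h1 : (X + 1 : ℂ[X]).natDegree = 1 := by
        simpa using Polynomial.natDegree_X_add_C (1 : ℂ)
      rw [h1, mul_one] at this
      exact this
    have hder_ne : derivative u ≠ 0 := by
      intro hd
      have := Polynomial.natDegree_eq_zero_of_derivative_eq_zero hd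
      omega
    have hder_dvd : (X + 1) ^ N ∣ derivative u := by
      obtain ⟨v, hv⟩ := hdvdu
      refine ⟨(X + 1) * derivative v + C ((N : ℂ) + 1) * v, ?_⟩
      rw [hv, derivative_mul, derivative_pow]
      simp only [derivative_add, derivative_X, derivative_one, add_zero, mul_one]
      push_cast
      ring_nf
    have hlt := ih (derivative u) hder_ne hder_dvd
    -- support of derivative u injects into u.support.erase 0
    have hsub : (derivative u).support.card ≤ u.support.card - 1 := by
      have h0mem : 0 ∈ u.support := mem_support_iff.2 hu0
      have : (derivative u).support.card ≤ (u.support.erase 0).card := by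
        apply Finset.card_le_card_of_injOn (fun n => n + 1)
        · intro a ha
          simp only [Finset.mem_coe, mem_support_iff] at ha
          rw [Polynomial.coeff_derivative] at ha
          have : u.coeff (a + 1) ≠ 0 := fun hc => ha (by simp [hc])
          exact Finset.mem_erase.2 ⟨Nat.succ_ne_zero a, mem_support_iff.2 this⟩
        · intro a _ b _ hab; simpa using hab
      rw [Finset.card_erase_of_mem h0mem] at this
      exact this
    have hcard : u.support.card = h.support.card := by
      rw [hu, card_support_X_pow_mul]
    omega

noncomputable def mySigma (N : ℕ) : ℤ → ℂ :=
  fun m => if m < 0 then (N.choose (-m - 1).toNat : ℂ) else 0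

/-- For any integer `d₂ ≤ −2` there is a choice of coefficients
`σ_{d₂+1}, …, σ_{−1}` (with `σ_m = 0` for `m ≥ 0` or `m ≤ d₂`) such that for
all `ℓ₁ ≥ 0` and `ℓ₃ ≤ −2` with `ℓ₁ + 1 ≤ min(−d₂−1, −ℓ₃−1)`, the matrix
`Θ_{ℓ₁,ℓ₃}` has maximal rank `ℓ₁ + 1`. -/
theorem stmt_7 (d₂ : ℤ) (hd₂ : d₂ ≤ -2) :
    ∃ σ : ℤ → ℂ,
      (∀ m : ℤ, 0 ≤ m → σ m = 0) ∧ (∀ m : ℤ, m ≤ d₂ → σ m = 0) ∧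
      ∀ ℓ₁ ℓ₃ : ℤ, 0 ≤ ℓ₁ → ℓ₃ ≤ -2 → ℓ₁ + 1 ≤ min (-d₂ - 1) (-ℓ₃ - 1) →
        (toeplitzTheta σ ℓ₁ ℓ₃).rank = (ℓ₁ + 1).toNat := by
  set N : ℕ := (-d₂ - 2).toNat with hN
  have hNZ : (N : ℤ) = -d₂ - 2 := Int.toNat_of_nonneg (by omega)
  refine ⟨mySigma N, ?_, ?_, ?_⟩
  · intro m hm; simp only [mySigma, if_neg (not_lt.2 hm)]
  · intro m hm
    have hm0 : m < 0 := by omega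
    simp only [mySigma, if_pos hm0]
    norm_cast
    apply Nat.choose_eq_zero_of_lt
    omega
  intro ℓ₁ ℓ₃ hl1 hl3 hmin
  set n : ℕ := (-ℓ₃ - 1).toNat with hn
  set p : ℕ := (ℓ₁ + 1).toNat with hp
  have hnZ : (n : ℤ) = -ℓ₃ - 1 := Int.toNat_of_nonneg (by omega)
  have hpZ : (p : ℤ) = ℓ₁ + 1 := Int.toNat_of_nonneg (by omega)
  have hpn : p ≤ n := by omega
  have hpN : p ≤ N + 1 := by omega
  have hppos : 0 < p := by omega
  set A : Matrix (Fin n) (Fin p) ℂ := toeplitzTheta (mySigma N) ℓ₁ ℓ₃ with hA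
  -- entries are binomial coefficients
  have hentry : ∀ (i : Fin n) (j : Fin p),
      A i j = (N.choose ((n - 1 - (i : ℕ)) + (j : ℕ)) : ℂ) := by
    intro i j
    have hi : (i : ℕ) < n := i.2
    have hj : (j : ℕ) < p := j.2
    have hm0 : ℓ₃ + (i : ℤ) - (j : ℤ) + 1 < 0 := by omega
    have harg : (-(ℓ₃ + (i : ℤ) - (j : ℤ) + 1) - 1).toNat = (n - 1 - (i : ℕ)) + (j : ℕ) := by
      omega
    simp only [hA, toeplitzTheta, Matrix.of_apply, mySigma, if_pos hm0, harg]
  -- injectivity of mulVecLin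
  have hinj : Function.Injective A.mulVecLin := by
    rw [← LinearMap.ker_eq_bot ,LinearMap.ker_eq_bot']
    intro x hx
    -- row equations (row n-1-s, for s < p)
    have hrow : ∀ s : ℕ, s < p → ∑ j : Fin p, (N.choose (s + (j : ℕ)) : ℂ) * x j = 0 := by
      intro s hs
      have hi : n - 1 - s < n := by omega
      have h0 := congrFun hx ⟨n - 1 - s, hi⟩
      simp only [Matrix.mulVecLin_apply] at h0
      have h1 : ∑ j : Fin p, A ⟨n - 1 - s, hi⟩ j * x j = 0 := by
        have : A.mulVec x ⟨n - 1 - s, hi⟩ = ∑ j : Fin p, A ⟨n - 1 - s, hi⟩ j * x j := rfl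
        rw [this] at h0
        simpa using h0
      calc ∑ j : Fin p, (N.choose (s + (j : ℕ)) : ℂ) * x j
          = ∑ j : Fin p, A ⟨n - 1 - s, hi⟩ j * x j := by
            refine Finset.sum_congr rfl fun j _ => ?_
            rw [hentry]
            have hv : n - 1 - ((⟨n - 1 - s, hi⟩ : Fin n) : ℕ) = s := by
              show n - 1 - (n - 1 - s) = s
              omega
            rw [hv]
        _ = 0 := h1
    -- polynomial argument
    set g : ℂ[X] := ∑ j : Fin p, C (x j) * X ^ (p - 1 - (j : ℕ)) with hg
    have hgcoeff : ∀ j : Fin p, g.coeff (p - 1 - (j : ℕ)) = x j := by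
      intro j
      rw [hg, finset_sum_coeff, Finset.sum_eq_single j]
      · simp [coeff_C_mul, coeff_X_pow]
      · intro j' _ hne'
        simp only [coeff_C_mul, coeff_X_pow]
        rw [if_neg, mul_zero]
        have hj := j.2
        have hj' := j'.2
        intro hcontra
        exact hne' (Fin.ext (by omega))
      · intro hj; exact absurd (Finset.mem_univ j) hj
    have hg0 : g = 0 := by
      by_contra hgne
      set h : ℂ[X] := (X + 1) ^ N * g with hh
      have hne : h ≠ 0 := mul_ne_zero (pow_ne_zero _ (Polynomial.monic_X_add_C (1:ℂ)).ne_zero) hgne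
      have hcard := card_support_gt_of_dvd N h hne ⟨g, rfl⟩
      have hcoeff : ∀ t : ℕ, h.coeff t = ∑ j : Fin p,
          x j * (if p - 1 - (j : ℕ) ≤ t then (N.choose (t - (p - 1 - (j : ℕ))) : ℂ) else 0) := by
        intro t
        rw [hh, hg, Finset.mul_sum, finset_sum_coeff]
        refine Finset.sum_congr rfl fun j _ => ?_
        rw [show (X + 1 : ℂ[X]) ^ N * (C (x j) * X ^ (p - 1 - (j : ℕ)))
            = (C (x j) * (X + 1) ^ N) * X ^ (p - 1 - (j : ℕ)) by ring]
        rw [coeff_mul_X_pow']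
        split
        · rw [coeff_C_mul, coeff_X_add_one_pow]
        · rw [mul_zero]
      have hvanish : ∀ t ∈ Finset.Ico (p - 1) (2 * p - 1), h.coeff t = 0 := by
        intro t ht
        rw [Finset.mem_Ico] at ht
        set s : ℕ := t - (p - 1) with hs
        have hsp : s < p := by omega
        rw [hcoeff]
        have := hrow s hsp
        calc ∑ j : Fin p, x j * (if p - 1 - (j : ℕ) ≤ t then (N.choose (t - (p - 1 - (j : ℕ))) : ℂ) else 0)
            = ∑ j : Fin p, (N.choose (s + (j : ℕ)) : ℂ) * x j := by
              refine Finset.sum_congr rfl fun j _ => ?_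
              have hj := j.2
              rw [if_pos (by omega), show t - (p - 1 - (j : ℕ)) = s + (j : ℕ) by omega, mul_comm]
          _ = 0 := this
      have hdegg : g.natDegree ≤ p - 1 := by
        refine Polynomial.natDegree_sum_le_of_forall_le _ _ fun j _ => ?_
        refine (Polynomial.natDegree_C_mul_le _ _).trans ?_
        rw [Polynomial.natDegree_X_pow]
        omega
      have hdeg : h.natDegree ≤ N + (p - 1) := by
        refine (Polynomial.natDegree_mul_le).trans ?_
        have h1 : ((X + 1 : ℂ[X]) ^ N).natDegree = N := by
          rw [Polynomial.natDegree_pow]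
          have : (X + 1 : ℂ[X]).natDegree = 1 := by
            simpa using Polynomial.natDegree_X_add_C (1 : ℂ)
          rw [this, mul_one]
        omega
      have hsubset : h.support ⊆ Finset.range (N + p) \ Finset.Ico (p - 1) (2 * p - 1) := by
        intro t ht
        rw [Finset.mem_sdiff, Finset.mem_range]
        constructor
        · have := Polynomial.le_natDegree_of_ne_zero (mem_support_iff.1 ht)
          omega
        · intro hmem
          exact mem_support_iff.1 ht (hvanish t hmem)
      have hcard2 : h.support.card ≤ N := by
        have hIsub : Finset.Ico (p - 1) (2 * p - 1) ⊆ Finset.range (N + p) := by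
          intro t ht
          rw [Finset.mem_Ico] at ht
          rw [Finset.mem_range]
          omega
        have := Finset.card_le_card hsubset
        rw [Finset.card_sdiff_of_subset hIsub, Finset.card_range, Nat.card_Ico] at this
        omega
      omega
    funext j
    have := hgcoeff j
    rw [hg0] at this
    simpa using this.symm
  have : A.rank = Fintype.card (Fin p) := by
    rw [Matrix.rank, LinearMap.finrank_range_of_inj hinj, Module.finrank_pi]
  simpa using this
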